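/- Let Γ : L = ⊕_{g∈G} L_g be a G-grading of a finite-dimensional complex Lie algebra L by an abelian group G. Then Γ is a fine group grading if and only if Diag(Γ) is a MAD-group in Aut L. -/

import Mathlib

/-- The eigenspace of a Lie algebra automorphism `g` for the eigenvalue `μ`. -/
def eig {L : Type} [LieRing L] [LieAlgebra ℂ L] (g : L ≃ₗ⁅ℂ⁆ L) (μ : ℂ) :
    Submodule ℂ L where
  carrier := {x | g x = μ • x}
  add_mem' := by
    intro a b ha hb
    simp only [Set.mem_setOf_eq] at *
    rw [show g (a + b) = g a + g b from g.toLinearEquiv.map_add a b, ha, hb, smul_add]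
  zero_mem' := by
    show g 0 = μ • 0
    rw [show g 0 = 0 from g.toLinearEquiv.map_zero, smul_zero]
  smul_mem' := by
    intro c x hx
    simp only [Set.mem_setOf_eq] at *
    rw [show g (c • x) = c • g x from g.toLinearEquiv.map_smul c x, hx, smul_comm]

/-- An automorphism is diagonalizable when `L` is the direct sum of its eigenspaces. -/
def IsDiagonalizable {L : Type} [LieRing L] [LieAlgebra ℂ L] (g : L ≃ₗ⁅ℂ⁆ L) : Prop :=
  iSupIndep (fun μ : ℂ => eig g μ) ∧ (⨆ μ : ℂ, eig g μ) = ⊤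

/-- A group grading of `L` by an abelian group `G`. -/
def IsGroupGrading {L : Type} [LieRing L] [LieAlgebra ℂ L]
    {G : Type} [AddCommGroup G] (ℒ : G → Submodule ℂ L) : Prop :=
  iSupIndep ℒ ∧ (⨆ g, ℒ g) = ⊤ ∧
  ∀ g h : G, ∀ x ∈ ℒ g, ∀ y ∈ ℒ h, ⁅x, y⁆ ∈ ℒ (g + h)

/-- A fine group grading: a group grading such that every group grading refining it has
the same nonzero subspaces (i.e. it admits no proper group refinement). -/
def IsFineGroupGrading {L : Type} [LieRing L] [LieAlgebra ℂ L]
    {G : Type} [AddCommGroup G] (ℒ : G → Submodule ℂ L) : Prop :=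
  IsGroupGrading ℒ ∧
  ∀ (H : Type) [AddCommGroup H], ∀ M : H → Submodule ℂ L,
    IsGroupGrading M → (∀ h, M h ≠ ⊥ → ∃ g, M h ≤ ℒ g) →
    {V : Submodule ℂ L | V ≠ ⊥ ∧ ∃ h, M h = V} = {V : Submodule ℂ L | V ≠ ⊥ ∧ ∃ g, ℒ g = V}

/-- `Diag(Γ)`. -/
def Diag {L : Type} [LieRing L] [LieAlgebra ℂ L] {J : Type}
    (ℒ : J → Submodule ℂ L) : Set (L ≃ₗ⁅ℂ⁆ L) :=
  {f | ∀ j : J, ∃ α : ℂ, α ≠ 0 ∧ ∀ x ∈ ℒ j, f x = α • x}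

/-- A MAD-group in `Aut L`: a set of pairwise commuting diagonalizable automorphisms
containing every diagonalizable automorphism commuting with all its elements. -/
def IsMAD {L : Type} [LieRing L] [LieAlgebra ℂ L] (𝒢 : Set (L ≃ₗ⁅ℂ⁆ L)) : Prop :=
  (∀ f ∈ 𝒢, IsDiagonalizable f) ∧
  (∀ f ∈ 𝒢, ∀ f' ∈ 𝒢, ∀ x : L, f (f' x) = f' (f x)) ∧
  (∀ h : L ≃ₗ⁅ℂ⁆ L, IsDiagonalizable h → (∀ f ∈ 𝒢, ∀ x : L, h (f x) = f (h x)) → h ∈ 𝒢)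

/-!
An automorphism commuting with `Diag Γ` commutes in particular with the automorphisms acting on
each `ℒ g` by `ψ g`, for the characters `ψ : G → ℂˣ`. Characters of an abelian group separate
points (already those with values in `ℚ/ℤ ⊆ ℂˣ`), so such an automorphism preserves every
`ℒ g`. If it is moreover diagonalizable, intersecting the `ℒ g` with its eigenspaces gives a
`G × ℂˣ`-grading refining `Γ`; fineness forces every `ℒ g` into a single eigenspace, i.e. the
automorphism lies in `Diag Γ`.

Conversely, let `Diag Γ` be maximal and let `M` be an `H`-graded refinement of `Γ`. The
character automorphisms of `M` lie in `Diag M ⊇ Diag Γ`, so they commute with `Diag Γ` and by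
maximality belong to it: each acts by one scalar on `ℒ g`. Since characters of `H` separate
points, `ℒ g` contains at most one nonzero `M h`, which is then all of `ℒ g` by independence.
-/

open DirectSum

noncomputable def ratCircleToRealCircle : AddCircle (1 : ℚ) →+ AddCircle (1 : ℝ) :=
  QuotientAddGroup.map _ _ (Rat.castHom ℝ).toAddMonoidHom <| by
    rintro _ ⟨n, rfl⟩
    exact ⟨n, by simp⟩

lemma ratCircleToRealCircle_injective : Function.Injective ratCircleToRealCircle := by
  refine (injective_iff_map_eq_zero _).mpr fun x hx => ?_
  induction x using QuotientAddGroup.induction_on with | H q => ?_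
  obtain ⟨n, hn⟩ := (AddCircle.coe_eq_zero_iff (p := (1 : ℝ))).mp hx
  refine (AddCircle.coe_eq_zero_iff (p := (1 : ℚ))).mpr ⟨n, ?_⟩
  simp only [zsmul_eq_mul, mul_one, RingHom.toAddMonoidHom_eq_coe, AddMonoidHom.coe_coe,
    Rat.coe_castHom] at hn ⊢
  exact_mod_cast hn

theorem exists_addChar_apply_ne {A : Type*} [AddCommGroup A] {a b : A} (hab : a ≠ b) :
    ∃ ψ : AddChar A ℂ, ψ a ≠ ψ b := by
  obtain ⟨c, hc⟩ :=
    CharacterModule.exists_character_apply_ne_zero_of_ne_zero (sub_ne_zero.mpr hab)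
  let ψ : AddChar A ℂ := Circle.coeHom.compAddChar
    (AddCircle.toCircle_addChar.compAddMonoidHom (ratCircleToRealCircle.comp c))
  refine ⟨ψ, fun h => hc ?_⟩
  have h1 : ψ (a - b) = 1 := by
    rw [AddChar.map_sub_eq_div, h, div_self (AddChar.val_isUnit ψ b).ne_zero]
  apply ratCircleToRealCircle_injective
  apply AddCircle.injective_toCircle one_ne_zero
  rw [map_zero, AddCircle.toCircle_zero]
  exact Circle.coe_inj.mp h1

section ModularLattice

variable {α ι κ : Type*} [CompleteLattice α] [IsModularLattice α]

theorem iSupIndep.inf_prod {A : ι → α} {B : κ → α} (hA : iSupIndep A) (hB : iSupIndep B) :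
    iSupIndep fun p : ι × κ => A p.1 ⊓ B p.2 := by
  rintro ⟨i, j⟩
  set A' := ⨆ (i' : ι) (_ : i' ≠ i), A i'
  set C := ⨆ (j' : κ) (_ : j' ≠ j), A i ⊓ B j'
  have hC : C ≤ A i := iSup₂_le fun _ _ => inf_le_left
  have hrest : ⨆ (p : ι × κ) (_ : p ≠ (i, j)), A p.1 ⊓ B p.2 ≤ A' ⊔ C := by
    refine iSup₂_le fun ⟨i', j'⟩ hp => ?_
    rcases eq_or_ne i' i with rfl | hi
    · exact le_sup_of_le_right (le_iSup₂_of_le j' (fun h => hp (by rw [h])) le_rfl)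
    · exact le_sup_of_le_left (le_iSup₂_of_le i' hi inf_le_left)
  have hAi : A i ⊓ (A' ⊔ C) = C := by
    rw [sup_comm, inf_comm, sup_inf_assoc_of_le _ hC, inf_comm, (hA i).eq_bot, sup_bot_eq]
  refine Disjoint.mono_right hrest ?_
  rw [disjoint_iff, inf_right_comm, hAi, ← disjoint_iff]
  exact (hB j).symm.mono (iSup₂_mono fun _ _ => inf_le_right) le_rfl

theorem iSupIndep.eq_of_le_of_iSup_eq_top {A B : ι → α} (hA : iSupIndep A)
    (hle : ∀ i, B i ≤ A i) (htop : ⨆ i, B i = ⊤) (i : ι) : B i = A i := by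
  refine eq_of_le_of_inf_le_of_le_sup (hle i) ?_ ?_ (z := ⨆ (j : ι) (_ : j ≠ i), B j)
  · exact (inf_le_inf_left _ (iSup₂_mono fun j _ => hle j)).trans
      ((hA i).eq_bot.trans_le bot_le)
  · rw [← iSup_split_single, htop]
    exact le_top

variable {A : ι → α} {B : κ → α}

theorem iSupIndep.iSup_le_eq_of_refines (hA : iSupIndep A) (htop : ⨆ k, B k = ⊤)
    (hle : ∀ k, B k ≠ ⊥ → ∃ i, B k ≤ A i) (i : ι) : ⨆ (k) (_ : B k ≤ A i), B k = A i := by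
  refine hA.eq_of_le_of_iSup_eq_top (B := fun i => ⨆ (k) (_ : B k ≤ A i), B k)
    (fun i => iSup₂_le fun _ h => h) (top_unique ?_) i
  refine htop.symm.le.trans (iSup_le fun k => ?_)
  rcases eq_or_ne (B k) ⊥ with hk | hk
  · exact hk.le.trans bot_le
  · obtain ⟨i', hi'⟩ := hle k hk
    exact le_iSup_of_le i' (le_iSup₂_of_le k hi' le_rfl)

theorem iSupIndep.setOf_ne_bot_eq_of_refines (hA : iSupIndep A) (htop : ⨆ k, B k = ⊤)
    (hle : ∀ k, B k ≠ ⊥ → ∃ i, B k ≤ A i)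
    (huniq : ∀ i k k', B k ≠ ⊥ → B k' ≠ ⊥ → B k ≤ A i → B k' ≤ A i → k = k') :
    {V | V ≠ ⊥ ∧ ∃ k, B k = V} = {V | V ≠ ⊥ ∧ ∃ i, A i = V} := by
  have hsup := hA.iSup_le_eq_of_refines htop hle
  have heq : ∀ i k, B k ≠ ⊥ → B k ≤ A i → B k = A i := fun i k hk hki =>
    le_antisymm hki <| (hsup i).symm.le.trans <| iSup₂_le fun k' hk'i => by
      rcases eq_or_ne (B k') ⊥ with hk' | hk'
      · exact hk'.le.trans bot_le
      · exact (congrArg B (huniq i k' k hk' hk hk'i hki)).le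
  ext V
  constructor
  · rintro ⟨hV, k, rfl⟩
    obtain ⟨i, hki⟩ := hle k hV
    exact ⟨hV, i, (heq i k hV hki).symm⟩
  · rintro ⟨hV, i, rfl⟩
    obtain ⟨k, hki, hk⟩ : ∃ k, B k ≤ A i ∧ B k ≠ ⊥ := by
      by_contra! h
      exact hV (by rw [← hsup i, eq_bot_iff]; exact iSup₂_le fun k hki => (h k hki).le)
    exact ⟨hV, k, heq i k hk hki⟩

end ModularLattice

namespace DirectSum

variable {R M ι : Type*} [CommRing R] [AddCommGroup M] [Module R M] [DecidableEq ι]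
  (ℳ : ι → Submodule R M) [Decomposition ℳ]

noncomputable def scaleMap (c : ι → R) : M →ₗ[R] M :=
  (decomposeLinearEquiv ℳ).symm.toLinearMap ∘ₗ lmap (fun i => c i • LinearMap.id) ∘ₗ
    (decomposeLinearEquiv ℳ).toLinearMap

variable {ℳ}

@[simp]
lemma decompose_scaleMap (c : ι → R) (x : M) (i : ι) :
    decompose ℳ (scaleMap ℳ c x) i = c i • decompose ℳ x i := by
  simp [scaleMap, decomposeLinearEquiv]

lemma scaleMap_apply_of_mem (c : ι → R) {i : ι} {x : M} (hx : x ∈ ℳ i) :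
    scaleMap ℳ c x = c i • x := by
  simp [scaleMap, decomposeLinearEquiv, decompose_of_mem ℳ hx]

lemma scaleMap_scaleMap (c d : ι → R) (x : M) :
    scaleMap ℳ c (scaleMap ℳ d x) = scaleMap ℳ (c * d) x := by
  refine LinearMap.congr_fun (decompose_lhom_ext ℳ (f := scaleMap ℳ c ∘ₗ scaleMap ℳ d)
    (g := scaleMap ℳ (c * d)) fun i => LinearMap.ext fun y => ?_) x
  simp [scaleMap_apply_of_mem _ y.2, smul_smul, mul_comm]

lemma scaleMap_one : scaleMap ℳ (1 : ι → R) = LinearMap.id :=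
  decompose_lhom_ext ℳ fun i => LinearMap.ext fun x => by simp [scaleMap_apply_of_mem _ x.2]

lemma mem_of_decompose_eq_zero {x : M} {i : ι} (h : ∀ j ≠ i, decompose ℳ x j = 0) :
    x ∈ ℳ i := by
  have hx : decompose ℳ x = of _ i (decompose ℳ x i) := by
    ext j
    rcases eq_or_ne j i with rfl | hj
    · simp
    · rw [of_eq_of_ne _ _ _ hj, h j hj]
  rw [← (decompose ℳ).symm_apply_apply x, hx, decompose_symm_of]
  exact SetLike.coe_mem _

lemma mapsTo_of_commute_scaleMap [IsDomain R] [NoZeroSMulDivisors R M] {κ : Type*}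
    (c : κ → ι → R) (hsep : ∀ i j, i ≠ j → ∃ k, c k i ≠ c k j) (f : M →ₗ[R] M)
    (hcomm : ∀ k x, f (scaleMap ℳ (c k) x) = scaleMap ℳ (c k) (f x))
    {i : ι} {x : M} (hx : x ∈ ℳ i) : f x ∈ ℳ i := by
  refine mem_of_decompose_eq_zero fun j hji => ?_
  obtain ⟨k, hk⟩ := hsep j i hji
  have hcomp := congrArg (fun y => (decompose ℳ y j : M)) (hcomm k x)
  simp only [scaleMap_apply_of_mem _ hx, map_smul, decompose_smul, decompose_scaleMap,
    Submodule.coe_smul] at hcomp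
  by_contra hne
  exact hk (smul_left_injective R (by exact_mod_cast hne) hcomp.symm)

lemma decompose_map_of_mapsTo (f : M →ₗ[R] M) (hf : ∀ i, ∀ x ∈ ℳ i, f x ∈ ℳ i)
    (x : M) (i : ι) : (decompose ℳ (f x) i : M) = f (decompose ℳ x i) := by
  induction x using Decomposition.inductionOn ℳ with
  | zero => simp
  | @homogeneous j y =>
    rcases eq_or_ne i j with rfl | hne
    · simp [decompose_of_mem_same ℳ (hf _ _ y.2)]
    · rw [decompose_of_mem_ne ℳ (hf _ _ y.2) hne.symm, decompose_of_mem_ne ℳ y.2 hne.symm,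
        map_zero]
  | add y z hy hz => simp [decompose_add, hy, hz]

lemma _root_.SetLike.IsHomogeneous.le_iSup_inf {V : Submodule R M}
    (hV : SetLike.IsHomogeneous ℳ V) : V ≤ ⨆ i, ℳ i ⊓ V := fun x hx => by
  classical
  rw [← sum_support_decompose ℳ x]
  exact Submodule.sum_mem _ fun i _ =>
    Submodule.mem_iSup_of_mem i ⟨(decompose ℳ x i).2, hV i hx⟩

end DirectSum

section LieAlgebra

variable {L : Type} [LieRing L] [LieAlgebra ℂ L]

lemma mem_eig {g : L ≃ₗ⁅ℂ⁆ L} {μ : ℂ} {x : L} : x ∈ eig g μ ↔ g x = μ • x := Iff.rfl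

lemma eig_eq_eigenspace (g : L ≃ₗ⁅ℂ⁆ L) (μ : ℂ) :
    eig g μ = Module.End.eigenspace (g.toLinearEquiv : L →ₗ[ℂ] L) μ := by
  ext x
  rw [mem_eig, Module.End.mem_eigenspace_iff]
  rfl

lemma iSupIndep_eig (g : L ≃ₗ⁅ℂ⁆ L) : iSupIndep (eig g) := by
  simpa only [funext (eig_eq_eigenspace g)] using Module.End.eigenspaces_iSupIndep _

lemma eig_zero (g : L ≃ₗ⁅ℂ⁆ L) : eig g 0 = ⊥ :=
  eq_bot_iff.mpr fun x hx => g.injective <| (mem_eig.mp hx).trans (by rw [zero_smul, map_zero])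

lemma lie_mem_eig {g : L ≃ₗ⁅ℂ⁆ L} {μ ν : ℂ} {x y : L} (hx : x ∈ eig g μ) (hy : y ∈ eig g ν) :
    ⁅x, y⁆ ∈ eig g (μ * ν) := by
  rw [mem_eig, LieEquiv.map_lie, mem_eig.mp hx, mem_eig.mp hy, smul_lie, lie_smul, smul_smul]

lemma isHomogeneous_eig {ι : Type} [DecidableEq ι] {ℳ : ι → Submodule ℂ L} [Decomposition ℳ]
    {h : L ≃ₗ⁅ℂ⁆ L} (hmaps : ∀ i, ∀ x ∈ ℳ i, h x ∈ ℳ i) (μ : ℂ) :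
    SetLike.IsHomogeneous ℳ (eig h μ) := fun i x hx => by
  have hcomp : (decompose ℳ (h x) i : L) = h (decompose ℳ x i) :=
    decompose_map_of_mapsTo h.toLinearEquiv.toLinearMap hmaps x i
  rw [mem_eig, ← hcomp, mem_eig.mp hx, decompose_smul]
  rfl

section Diag

variable {J K : Type} {A : J → Submodule ℂ L}

lemma isDiagonalizable_of_mem_Diag (htop : ⨆ j, A j = ⊤) {f : L ≃ₗ⁅ℂ⁆ L} (hf : f ∈ Diag A) :
    IsDiagonalizable f := by
  refine ⟨iSupIndep_eig f, top_unique (htop.symm.le.trans (iSup_le fun j => ?_))⟩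
  obtain ⟨α, -, hα⟩ := hf j
  exact le_iSup_of_le α fun x hx => mem_eig.mpr (hα x hx)

lemma commute_of_mem_Diag (htop : ⨆ j, A j = ⊤) {f f' : L ≃ₗ⁅ℂ⁆ L} (hf : f ∈ Diag A)
    (hf' : f' ∈ Diag A) (x : L) : f (f' x) = f' (f x) := by
  have hx : x ∈ ⨆ j, A j := htop ▸ Submodule.mem_top
  induction hx using Submodule.iSup_induction' with
  | mem j x hx =>
    obtain ⟨α, -, hα⟩ := hf j
    obtain ⟨α', -, hα'⟩ := hf' j
    rw [hα x hx, hα' x hx, map_smul, map_smul, hα x hx, hα' x hx, smul_comm]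
  | zero => simp only [map_zero]
  | add x y _ _ hx hy => simp only [map_add, hx, hy]

lemma Diag_subset_Diag_of_refines {B : K → Submodule ℂ L}
    (hle : ∀ k, B k ≠ ⊥ → ∃ j, B k ≤ A j) : Diag A ⊆ Diag B := fun f hf k => by
  rcases eq_or_ne (B k) ⊥ with hk | hk
  · exact ⟨1, one_ne_zero, fun x hx => by simp_all⟩
  · obtain ⟨j, hkj⟩ := hle k hk
    obtain ⟨α, hα0, hα⟩ := hf j
    exact ⟨α, hα0, fun x hx => hα x (hkj hx)⟩

end Diag

lemma IsGroupGrading.isInternal {G : Type} [AddCommGroup G] [DecidableEq G]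
    {ℒ : G → Submodule ℂ L} (hΓ : IsGroupGrading ℒ) : IsInternal ℒ :=
  isInternal_submodule_of_iSupIndep_of_iSup_eq_top hΓ.1 hΓ.2.1

section Decomposition

variable {G : Type} [AddCommGroup G] [DecidableEq G] {ℒ : G → Submodule ℂ L} [Decomposition ℒ]

noncomputable def charAut (hbr : ∀ g h : G, ∀ x ∈ ℒ g, ∀ y ∈ ℒ h, ⁅x, y⁆ ∈ ℒ (g + h))
    (ψ : AddChar G ℂ) : L ≃ₗ⁅ℂ⁆ L where
  toLinearMap := scaleMap ℒ ψ
  invFun := scaleMap ℒ fun g => ψ (-g)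
  left_inv x := by
    simp [scaleMap_scaleMap, ← AddChar.map_add_eq_mul, Pi.mul_def, ← Pi.one_def, scaleMap_one]
  right_inv x := by
    simp [scaleMap_scaleMap, ← AddChar.map_add_eq_mul, Pi.mul_def, ← Pi.one_def, scaleMap_one]
  map_lie' {x y} := by
    induction x using Decomposition.inductionOn ℒ with
    | zero => simp
    | homogeneous x =>
      induction y using Decomposition.inductionOn ℒ with
      | zero => simp
      | homogeneous y =>
        change scaleMap ℒ ψ ⁅(x : L), (y : L)⁆ = ⁅scaleMap ℒ ψ x, scaleMap ℒ ψ y⁆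
        rw [scaleMap_apply_of_mem _ (hbr _ _ _ x.2 _ y.2), scaleMap_apply_of_mem _ x.2,
          scaleMap_apply_of_mem _ y.2, smul_lie, lie_smul, smul_smul, AddChar.map_add_eq_mul,
          mul_comm]
      | add y z hy hz => simp_all [lie_add]
    | add x z hx hz => simp_all [add_lie]

variable (hbr : ∀ g h : G, ∀ x ∈ ℒ g, ∀ y ∈ ℒ h, ⁅x, y⁆ ∈ ℒ (g + h))
include hbr

lemma charAut_apply_of_mem (ψ : AddChar G ℂ) {g : G} {x : L} (hx : x ∈ ℒ g) :
    charAut hbr ψ x = ψ g • x :=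
  scaleMap_apply_of_mem _ hx

lemma charAut_mem_Diag (ψ : AddChar G ℂ) : charAut hbr ψ ∈ Diag ℒ := fun g =>
  ⟨ψ g, (AddChar.val_isUnit ψ g).ne_zero, fun _ hx => charAut_apply_of_mem hbr ψ hx⟩

lemma mapsTo_of_commute_Diag {h : L ≃ₗ⁅ℂ⁆ L} (hcomm : ∀ f ∈ Diag ℒ, ∀ x, h (f x) = f (h x))
    {g : G} {x : L} (hx : x ∈ ℒ g) : h x ∈ ℒ g :=
  mapsTo_of_commute_scaleMap (fun ψ : AddChar G ℂ => ⇑ψ) (fun _ _ => exists_addChar_apply_ne)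
    h.toLinearEquiv.toLinearMap (fun ψ x => hcomm _ (charAut_mem_Diag hbr ψ) x) hx

end Decomposition

section Fine

variable {G : Type} [AddCommGroup G] {ℒ : G → Submodule ℂ L}

/-- Eigenvalues of an automorphism are nonzero, so they can be recorded in the group
`Additive ℂˣ`. -/
def eigRefinement (ℒ : G → Submodule ℂ L) (h : L ≃ₗ⁅ℂ⁆ L) :
    G × Additive ℂˣ → Submodule ℂ L :=
  fun p => ℒ p.1 ⊓ eig h (p.2.toMul : ℂ)

lemma isGroupGrading_eigRefinement [DecidableEq G] [Decomposition ℒ] (hΓ : IsGroupGrading ℒ)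
    {h : L ≃ₗ⁅ℂ⁆ L} (hdiag : IsDiagonalizable h) (hmaps : ∀ g, ∀ x ∈ ℒ g, h x ∈ ℒ g) :
    IsGroupGrading (eigRefinement ℒ h) := by
  refine ⟨hΓ.1.inf_prod ((iSupIndep_eig h).comp
    (Units.val_injective.comp Additive.toMul.injective)), top_unique ?_, ?_⟩
  · refine hdiag.2.symm.le.trans (iSup_le fun μ => ?_)
    rcases eq_or_ne μ 0 with rfl | hμ
    · exact (eig_zero h).le.trans bot_le
    · refine (SetLike.IsHomogeneous.le_iSup_inf (isHomogeneous_eig hmaps μ)).trans ?_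
      exact iSup_le fun g => le_iSup_of_le (g, Additive.ofMul (Units.mk0 μ hμ)) le_rfl
  · rintro ⟨g, μ⟩ ⟨g', ν⟩ x ⟨hx, hxμ⟩ y ⟨hy, hyν⟩
    exact ⟨hΓ.2.2 _ _ _ hx _ hy, lie_mem_eig hxμ hyν⟩

theorem IsFineGroupGrading.mem_Diag_of_commute (hfine : IsFineGroupGrading ℒ)
    {h : L ≃ₗ⁅ℂ⁆ L} (hdiag : IsDiagonalizable h)
    (hcomm : ∀ f ∈ Diag ℒ, ∀ x, h (f x) = f (h x)) : h ∈ Diag ℒ := by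
  classical
  let _ := hfine.1.isInternal.chooseDecomposition
  have hgr := isGroupGrading_eigRefinement hfine.1 hdiag
    fun _ _ hx => mapsTo_of_commute_Diag hfine.1.2.2 hcomm hx
  have hpieces := hfine.2 _ _ hgr fun p _ => ⟨p.1, inf_le_left⟩
  intro g
  rcases eq_or_ne (ℒ g) ⊥ with hg | hg
  · exact ⟨1, one_ne_zero, fun x hx => by simp_all⟩
  · obtain ⟨-, ⟨g', μ⟩, hp⟩ : ℒ g ∈ {V | V ≠ ⊥ ∧ ∃ p, eigRefinement ℒ h p = V} :=
      hpieces ▸ ⟨hg, g, rfl⟩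
    refine ⟨μ.toMul, μ.toMul.ne_zero, fun x hx => mem_eig.mp ?_⟩
    exact (show x ∈ eigRefinement ℒ h (g', μ) from hp ▸ hx).2

theorem IsFineGroupGrading.isMAD_Diag (hfine : IsFineGroupGrading ℒ) : IsMAD (Diag ℒ) :=
  ⟨fun _ hf => isDiagonalizable_of_mem_Diag hfine.1.2.1 hf,
    fun _ hf _ hf' => commute_of_mem_Diag hfine.1.2.1 hf hf',
    fun _ hdiag hcomm => hfine.mem_Diag_of_commute hdiag hcomm⟩

theorem IsGroupGrading.isFineGroupGrading_of_isMAD_Diag (hΓ : IsGroupGrading ℒ)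
    (hmad : IsMAD (Diag ℒ)) : IsFineGroupGrading ℒ := by
  refine ⟨hΓ, fun H _ M hM hle => hΓ.1.setOf_ne_bot_eq_of_refines hM.2.1 hle ?_⟩
  classical
  let _ := hM.isInternal.chooseDecomposition
  have hchar (ψ : AddChar H ℂ) : charAut hM.2.2 ψ ∈ Diag ℒ :=
    hmad.2.2 _ (isDiagonalizable_of_mem_Diag hM.2.1 (charAut_mem_Diag hM.2.2 ψ))
      fun _ hf => commute_of_mem_Diag hM.2.1 (charAut_mem_Diag _ ψ)
        (Diag_subset_Diag_of_refines hle hf)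
  intro g k k' hk hk' hkg hk'g
  by_contra hne
  obtain ⟨ψ, hψ⟩ := exists_addChar_apply_ne hne
  obtain ⟨α, -, hα⟩ := hchar ψ g
  have hval {k : H} (hk : M k ≠ ⊥) (hkg : M k ≤ ℒ g) : ψ k = α := by
    obtain ⟨x, hx, hx0⟩ := Submodule.exists_mem_ne_zero_of_ne_bot hk
    exact smul_left_injective ℂ hx0 ((charAut_apply_of_mem _ ψ hx).symm.trans (hα x (hkg hx)))
  exact hψ ((hval hk hkg).trans (hval hk' hk'g).symm)

end Fine

end LieAlgebra

theorem statement5_general (L : Type) [LieRing L] [LieAlgebra ℂ L]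
    (G : Type) [AddCommGroup G] (ℒ : G → Submodule ℂ L)
    (hΓ : IsGroupGrading ℒ) :
    IsFineGroupGrading ℒ ↔ IsMAD (Diag ℒ) :=
  ⟨IsFineGroupGrading.isMAD_Diag, hΓ.isFineGroupGrading_of_isMAD_Diag⟩

/-- a group grading `Γ` of a finite-dimensional complex Lie algebra `L` is a
fine group grading if and only if `Diag(Γ)` is a MAD-group in `Aut L`. -/
theorem statement5 (L : Type) [LieRing L] [LieAlgebra ℂ L] [FiniteDimensional ℂ L]
    (G : Type) [AddCommGroup G] (ℒ : G → Submodule ℂ L)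
    (hΓ : IsGroupGrading ℒ) :
    IsFineGroupGrading ℒ ↔ IsMAD (Diag ℒ) :=
  statement5_general L G ℒ hΓ
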